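/- For any continuous distribution function F on the real line with characteristic function f̂ (i.e., f̂(ω) = E[e^{iωX}] for X ~ F), and any point x at which F is continuous, one has F(x) = 1/2 - (1/π) lim_{T→∞} ∫_{1/T}^{T} ω^{-1} Im{e^{-iωx} f̂(ω)} dω (the Gil-Pelaez inversion formula). -/

import Mathlib

/-!
Since `Im (e^{-iωx} φ ω) = ∫ sin (ω (t - x)) dμ(t)`, exchanging the order of integration turns
the truncated integral into `∫ (Si (T (t - x)) - Si ((t - x) / T)) dμ(t)`, where `Si` is the sine
integral. `Si` is bounded and tends to `± π / 2` at `± ∞` (Dirichlet's integral, evaluated by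
writing `1 / t = ∫₀^∞ e^{-ts} ds`), so by dominated convergence the limit is
`π / 2 * ∫ sign (t - x) dμ = π / 2 * (μ (x, ∞) - μ (-∞, x))`; at a continuity point of `F`
the atom at `x` vanishes, which gives `π (1 / 2 - F x)`.
-/

open MeasureTheory Filter Real Set Topology

noncomputable def sineIntegral (R : ℝ) : ℝ := ∫ v in 0..R, sinc v

theorem continuous_sineIntegral : Continuous sineIntegral :=
  intervalIntegral.continuous_primitive (fun _ _ ↦ continuous_sinc.intervalIntegrable _ _) 0

@[simp] theorem sineIntegral_zero : sineIntegral 0 = 0 := by simp [sineIntegral]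

theorem sineIntegral_neg (R : ℝ) : sineIntegral (-R) = -sineIntegral R := by
  have := intervalIntegral.integral_comp_neg (a := 0) (b := R) sinc
  simp only [sinc_neg, neg_zero] at this
  rw [sineIntegral, sineIntegral, this, intervalIntegral.integral_symm]

theorem integral_sinc_eq_sub (a b : ℝ) : ∫ v in a..b, sinc v = sineIntegral b - sineIntegral a :=
  (intervalIntegral.integral_interval_sub_left (continuous_sinc.intervalIntegrable _ _)
    (continuous_sinc.intervalIntegrable _ _)).symm

theorem abs_sineIntegral_le_abs (R : ℝ) : |sineIntegral R| ≤ |R| := by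
  have := intervalIntegral.norm_integral_le_of_norm_le_const (a := 0) (b := R) (f := sinc) (C := 1)
    fun v _ ↦ abs_sinc_le_one v
  simpa [sineIntegral] using this

theorem integral_Ioi_exp_neg_mul {b : ℝ} (hb : 0 < b) : ∫ s in Ioi 0, exp (-b * s) = b⁻¹ := by
  rw [integral_exp_mul_Ioi (neg_lt_zero.mpr hb)]
  simp

theorem integral_sin_mul_exp_neg_mul (s R : ℝ) :
    ∫ t in 0..R, sin t * exp (-t * s) =
      ((Complex.exp ((Complex.I - s) * R) - 1) / (Complex.I - s)).im := by
  have hne : Complex.I - s ≠ 0 := fun h ↦ by simpa using congrArg Complex.im h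
  have him (t : ℝ) : sin t * exp (-t * s) = (Complex.exp ((Complex.I - s) * t)).im := by
    rw [Complex.exp_im]
    simp [Complex.mul_re, Complex.mul_im, mul_comm]
  have hint : IntervalIntegrable (fun t : ℝ ↦ Complex.exp ((Complex.I - s) * t)) volume 0 R :=
    (by fun_prop : Continuous fun t : ℝ ↦ Complex.exp ((Complex.I - s) * t)).intervalIntegrable _ _
  simp_rw [him, ← Complex.imCLM_apply, Complex.imCLM.intervalIntegral_comp_comm hint,
    integral_exp_mul_complex hne]
  simp

theorem sineIntegral_eq_integral_Ioi {R : ℝ} (hR : 0 < R) :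
    sineIntegral R =
      ∫ s : ℝ in Ioi 0, ((Complex.exp ((Complex.I - s) * R) - 1) / (Complex.I - s)).im := by
  set f : ℝ → ℝ → ℝ := fun t s ↦ sin t * exp (-t * s)
  have hf_inner {t : ℝ} (ht : 0 < t) : ∫ s in Ioi 0, f t s = sinc t := by
    rw [integral_const_mul, integral_Ioi_exp_neg_mul ht, sinc_of_ne_zero ht.ne', div_eq_mul_inv]
  have hf_norm {t : ℝ} (ht : 0 < t) : ∫ s in Ioi 0, ‖f t s‖ = |sinc t| := by
    simp_rw [f, norm_mul, norm_of_nonneg (exp_pos _).le]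
    rw [integral_const_mul, integral_Ioi_exp_neg_mul ht, sinc_of_ne_zero ht.ne', abs_div,
      abs_of_pos ht, Real.norm_eq_abs, div_eq_mul_inv]
  have hf_int : Integrable (Function.uncurry f)
      ((volume.restrict (Ioc 0 R)).prod (volume.restrict (Ioi 0))) := by
    have hf_cont : Continuous (Function.uncurry f) := by fun_prop
    refine (integrable_prod_iff hf_cont.aestronglyMeasurable).mpr ⟨?_, ?_⟩
    · filter_upwards [ae_restrict_mem measurableSet_Ioc] with t ht
      simpa [f, neg_mul] using (integrableOn_exp_mul_Ioi (neg_lt_zero.mpr ht.1) 0).const_mul (sin t)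
    · refine (continuous_sinc.abs.integrableOn_Ioc (a := 0) (b := R)).congr ?_
      filter_upwards [ae_restrict_mem measurableSet_Ioc] with t ht
      exact (hf_norm ht.1).symm
  calc sineIntegral R = ∫ t in Ioc 0 R, sinc t := intervalIntegral.integral_of_le hR.le
    _ = ∫ t in Ioc 0 R, ∫ s in Ioi 0, f t s :=
        setIntegral_congr_fun measurableSet_Ioc fun t ht ↦ (hf_inner ht.1).symm
    _ = ∫ s in Ioi 0, ∫ t in Ioc 0 R, f t s := integral_integral_swap hf_int
    _ = _ := by
        refine integral_congr_ae (ae_of_all _ fun s ↦ ?_)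
        dsimp only
        rw [← intervalIntegral.integral_of_le hR.le, integral_sin_mul_exp_neg_mul]

theorem abs_sineIntegral_sub_pi_div_two_le {R : ℝ} (hR : 0 < R) :
    |sineIntegral R - π / 2| ≤ R⁻¹ := by
  have hne (s : ℝ) : Complex.I - s ≠ 0 := fun h ↦ by simpa using congrArg Complex.im h
  set g : ℝ → ℝ := fun s ↦ (Complex.exp ((Complex.I - s) * R) / (Complex.I - s)).im
  have hg_le (s : ℝ) : ‖g s‖ ≤ exp (-R * s) :=
    calc ‖g s‖ ≤ ‖Complex.exp ((Complex.I - s) * R) / (Complex.I - s)‖ :=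
          Complex.abs_im_le_norm _
      _ = exp (-R * s) / ‖Complex.I - s‖ := by
          rw [norm_div, Complex.norm_exp]
          congr 2
          simp [Complex.mul_re, mul_comm]
      _ ≤ exp (-R * s) :=
          div_le_self (exp_pos _).le (by simpa using Complex.abs_im_le_norm (Complex.I - s))
  have hexp_int : IntegrableOn (fun s ↦ exp (-R * s)) (Ioi 0) :=
    integrableOn_exp_mul_Ioi (neg_lt_zero.mpr hR) 0
  have hg_cont : Continuous g :=
    Complex.continuous_im.comp (Continuous.div (by fun_prop) (by fun_prop) hne)
  have hg_int : IntegrableOn g (Ioi 0) :=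
    hexp_int.mono' hg_cont.aestronglyMeasurable (ae_of_all _ hg_le)
  have hsplit (s : ℝ) :
      ((Complex.exp ((Complex.I - s) * R) - 1) / (Complex.I - s)).im = g s + (1 + s ^ 2)⁻¹ := by
    have him : (-1 / (Complex.I - s)).im = (1 + s ^ 2)⁻¹ := by
      simp [Complex.normSq_apply, sq, add_comm, neg_div]
    rw [sub_eq_add_neg, add_div, Complex.add_im, him]
  have hdiff : sineIntegral R - π / 2 = ∫ s in Ioi 0, g s := by
    rw [sineIntegral_eq_integral_Ioi hR, integral_congr_ae (ae_of_all _ hsplit),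
      integral_add hg_int integrable_inv_one_add_sq.integrableOn, integral_Ioi_inv_one_add_sq,
      arctan_zero]
    ring
  rw [hdiff, ← integral_Ioi_exp_neg_mul hR, ← Real.norm_eq_abs]
  exact norm_integral_le_of_norm_le hexp_int (ae_of_all _ hg_le)

theorem tendsto_sineIntegral_atTop : Tendsto sineIntegral atTop (𝓝 (π / 2)) := by
  refine tendsto_iff_norm_sub_tendsto_zero.mpr (squeeze_zero_norm' ?_ tendsto_inv_atTop_zero)
  filter_upwards [eventually_gt_atTop 0] with R hR
  simpa using abs_sineIntegral_sub_pi_div_two_le hR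

theorem abs_sineIntegral_le (R : ℝ) : |sineIntegral R| ≤ π / 2 + 1 := by
  wlog hR : 0 ≤ R generalizing R
  · simpa [sineIntegral_neg] using this (-R) (by linarith)
  rcases le_or_gt R 1 with hR1 | hR1
  · calc |sineIntegral R| ≤ |R| := abs_sineIntegral_le_abs R
      _ ≤ π / 2 + 1 := by rw [abs_of_nonneg hR]; linarith [pi_pos]
  · have hclose := abs_sineIntegral_sub_pi_div_two_le (by linarith : 0 < R)
    have := abs_sub_abs_le_abs_sub (sineIntegral R) (π / 2)
    rw [abs_of_pos (by positivity : 0 < π / 2)] at this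
    linarith [inv_lt_one_of_one_lt₀ hR1]

theorem tendsto_sineIntegral_mul_sub (u : ℝ) :
    Tendsto (fun T ↦ sineIntegral (T * u) - sineIntegral (T⁻¹ * u)) atTop
      (𝓝 (π / 2 * Real.sign u)) := by
  have hsmall : Tendsto (fun T ↦ sineIntegral (T⁻¹ * u)) atTop (𝓝 0) := by
    refine (continuous_sineIntegral.tendsto' 0 0 sineIntegral_zero).comp ?_
    simpa using tendsto_inv_atTop_zero.mul_const u
  have hlarge : Tendsto (fun T ↦ sineIntegral (T * u)) atTop (𝓝 (π / 2 * Real.sign u)) := by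
    rcases lt_trichotomy u 0 with hu | rfl | hu
    · have := (tendsto_sineIntegral_atTop.comp (tendsto_id.atTop_mul_const (neg_pos.mpr hu))).neg
      simpa [Real.sign_of_neg hu, Function.comp_def, ← sineIntegral_neg] using this
    · simp
    · simpa [Real.sign_of_pos hu, Function.comp_def] using
        tendsto_sineIntegral_atTop.comp (tendsto_id.atTop_mul_const hu)
  simpa using hlarge.sub hsmall

theorem integral_sin_mul_div {a b : ℝ} (ha : 0 < a) (hb : 0 < b) (u : ℝ) :
    ∫ ω in a..b, sin (ω * u) / ω = sineIntegral (b * u) - sineIntegral (a * u) := by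
  have hsinc : EqOn (fun ω ↦ sin (ω * u) / ω) (fun ω ↦ u • sinc (ω * u)) (uIcc a b) := by
    intro ω hω
    have hω : ω ≠ 0 := (lt_of_lt_of_le (lt_min ha hb) hω.1).ne'
    rcases eq_or_ne u 0 with rfl | hu
    · simp
    · simp only [smul_eq_mul]
      rw [sinc_of_ne_zero (mul_ne_zero hω hu)]
      field_simp
  rw [intervalIntegral.integral_congr hsinc, intervalIntegral.integral_smul,
    intervalIntegral.smul_integral_comp_mul_right, integral_sinc_eq_sub]

theorem im_exp_mul_integral_exp (μ : Measure ℝ) [IsFiniteMeasure μ] (ω x : ℝ) :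
    (Complex.exp (-(Complex.I * ω * x)) * ∫ t, Complex.exp (Complex.I * ω * t) ∂μ).im =
      ∫ t, sin (ω * (t - x)) ∂μ := by
  have hshift (t : ℝ) : Complex.exp (-(Complex.I * ω * x)) * Complex.exp (Complex.I * ω * t) =
      Complex.exp ((ω * (t - x) : ℝ) * Complex.I) := by
    rw [← Complex.exp_add]
    push_cast
    ring_nf
  have hint : Integrable (fun t : ℝ ↦ Complex.exp ((ω * (t - x) : ℝ) * Complex.I)) μ :=
    Integrable.of_bound (by fun_prop) 1
      (ae_of_all _ fun t ↦ (Complex.norm_exp_ofReal_mul_I _).le)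
  rw [← integral_const_mul]
  simp_rw [hshift, ← Complex.imCLM_apply, ← Complex.imCLM.integral_comp_comm hint,
    Complex.imCLM_apply, Complex.exp_ofReal_mul_I_im]

theorem integral_integral_sin_mul_div (μ : Measure ℝ) [IsFiniteMeasure μ] {a b : ℝ} (ha : 0 < a)
    (hab : a ≤ b) (x : ℝ) :
    ∫ ω in a..b, (∫ t, sin (ω * (t - x)) ∂μ) / ω =
      ∫ t, (sineIntegral (b * (t - x)) - sineIntegral (a * (t - x))) ∂μ := by
  have hbound :
      ∀ᵐ p ∂(volume.restrict (Ioc a b)).prod μ, ‖sin (p.1 * (p.2 - x)) / p.1‖ ≤ a⁻¹ := by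
    filter_upwards [Measure.quasiMeasurePreserving_fst.ae (ae_restrict_mem measurableSet_Ioc)]
      with p hp
    have hp1 : 0 < p.1 := ha.trans hp.1
    rw [norm_div, Real.norm_of_nonneg hp1.le, div_eq_mul_inv]
    simpa using mul_le_mul (abs_sin_le_one _) (inv_anti₀ ha hp.1.le) (by positivity) zero_le_one
  have hint : Integrable (Function.uncurry fun ω t ↦ sin (ω * (t - x)) / ω)
      ((volume.restrict (Ioc a b)).prod μ) :=
    Integrable.of_bound (by fun_prop : Measurable _).aestronglyMeasurable _ hbound
  rw [intervalIntegral.integral_of_le hab]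
  calc ∫ ω in Ioc a b, (∫ t, sin (ω * (t - x)) ∂μ) / ω
      = ∫ ω in Ioc a b, ∫ t, sin (ω * (t - x)) / ω ∂μ := by simp_rw [integral_div]
    _ = ∫ t, (∫ ω in Ioc a b, sin (ω * (t - x)) / ω) ∂μ := integral_integral_swap hint
    _ = _ := by
        refine integral_congr_ae (ae_of_all _ fun t ↦ ?_)
        dsimp only
        rw [← intervalIntegral.integral_of_le hab, integral_sin_mul_div ha (ha.trans_le hab)]

theorem integral_sign_sub (μ : Measure ℝ) [IsFiniteMeasure μ] (x : ℝ) :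
    ∫ t, Real.sign (t - x) ∂μ = μ.real (Ioi x) - μ.real (Iio x) := by
  have hsign (t : ℝ) : Real.sign (t - x) = (Ioi x).indicator 1 t - (Iio x).indicator 1 t := by
    rcases lt_trichotomy t x with h | rfl | h
    · simp [h, Real.sign_of_neg (sub_neg.mpr h), not_lt.mpr h.le]
    · simp
    · simp [h, Real.sign_of_pos (sub_pos.mpr h), not_lt.mpr h.le]
  rw [integral_congr_ae (ae_of_all _ hsign),
    integral_sub ((integrable_const 1).indicator measurableSet_Ioi)
      ((integrable_const 1).indicator measurableSet_Iio),
    integral_indicator_one measurableSet_Ioi, integral_indicator_one measurableSet_Iio]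

theorem tendsto_integral_sineIntegral_mul_sub (μ : Measure ℝ) [IsFiniteMeasure μ] (x : ℝ) :
    Tendsto (fun T ↦ ∫ t, (sineIntegral (T * (t - x)) - sineIntegral (T⁻¹ * (t - x))) ∂μ) atTop
      (𝓝 (π / 2 * (μ.real (Ioi x) - μ.real (Iio x)))) := by
  rw [← integral_sign_sub, ← integral_const_mul]
  refine tendsto_integral_filter_of_dominated_convergence (fun _ ↦ 2 * (π / 2 + 1))
    (Eventually.of_forall fun T ↦ ?_) (Eventually.of_forall fun T ↦ ae_of_all _ fun t ↦ ?_)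
    (integrable_const _) (ae_of_all _ fun t ↦ tendsto_sineIntegral_mul_sub (t - x))
  · exact ((continuous_sineIntegral.comp (by fun_prop)).sub
      (continuous_sineIntegral.comp (by fun_prop))).aestronglyMeasurable
  · rw [Real.norm_eq_abs]
    linarith [abs_sub (sineIntegral (T * (t - x))) (sineIntegral (T⁻¹ * (t - x))),
      abs_sineIntegral_le (T * (t - x)), abs_sineIntegral_le (T⁻¹ * (t - x))]

theorem measureReal_Iio_of_continuousAt {μ : Measure ℝ} [IsFiniteMeasure μ] {x : ℝ}
    (h : ContinuousAt (fun t ↦ μ.real (Iic t)) x) : μ.real (Iio x) = μ.real (Iic x) := by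
  refine le_antisymm (measureReal_mono Iio_subset_Iic_self)
    (le_of_tendsto (h.tendsto.mono_left nhdsWithin_le_nhds : Tendsto _ (𝓝[<] x) _) ?_)
  filter_upwards [self_mem_nhdsWithin] with y hy
  exact measureReal_mono (Iic_subset_Iio.mpr hy)

theorem gil_pelaez_inversion_general
    (μ : Measure ℝ) [IsProbabilityMeasure μ]
    (F : ℝ → ℝ) (hF : ∀ t, F t = (μ (Set.Iic t)).toReal)
    (φ : ℝ → ℂ) (hφ : ∀ ω, φ ω = ∫ t, Complex.exp (Complex.I * ω * t) ∂μ)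
    (x : ℝ) (hx : ContinuousAt F x) :
    Tendsto (fun T : ℝ =>
        ∫ ω in (1/T)..T, (Complex.exp (-(Complex.I * ω * x)) * φ ω).im / ω)
      atTop (nhds (π * (1/2 - F x))) := by
  obtain rfl : F = fun t ↦ μ.real (Iic t) := funext hF
  have hIio : μ.real (Iio x) = μ.real (Iic x) := measureReal_Iio_of_continuousAt hx
  have hIoi : μ.real (Ioi x) = 1 - μ.real (Iic x) := by
    rw [← compl_Iic, measureReal_compl measurableSet_Iic, probReal_univ]
  rw [show π * (1 / 2 - μ.real (Iic x)) = π / 2 * (μ.real (Ioi x) - μ.real (Iio x)) by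
    rw [hIio, hIoi]; ring]
  refine (tendsto_integral_sineIntegral_mul_sub μ x).congr' ?_
  filter_upwards [eventually_ge_atTop 1] with T hT
  simp_rw [hφ, im_exp_mul_integral_exp]
  rw [integral_integral_sin_mul_div μ (by positivity) ((div_le_self zero_le_one hT).trans hT),
    one_div]

/-- Gil-Pelaez inversion formula: for a continuous distribution function `F` on ℝ
with characteristic function `φ`, at every continuity point `x`,
`F x = 1/2 - (1/π) * lim_{T→∞} ∫_{1/T}^T Im(e^{-iωx} φ ω)/ω dω`. -/
theorem gil_pelaez_inversion
    (μ : Measure ℝ) [IsProbabilityMeasure μ]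
    (F : ℝ → ℝ) (hF : ∀ t, F t = (μ (Set.Iic t)).toReal)
    (hFcont : Continuous F)
    (φ : ℝ → ℂ) (hφ : ∀ ω, φ ω = ∫ t, Complex.exp (Complex.I * ω * t) ∂μ)
    (x : ℝ) (hx : ContinuousAt F x) :
    Tendsto (fun T : ℝ =>
        ∫ ω in (1/T)..T, (Complex.exp (-(Complex.I * ω * x)) * φ ω).im / ω)
      atTop (nhds (π * (1/2 - F x))) :=
  gil_pelaez_inversion_general μ F hF φ hφ x hx
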